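/- Let (W,S) be an irreducible infinite Coxeter system with standard Coxeter element c of length n (the rank). If c is straight, then the set Φ⁺(c⁻¹) of positive roots sent to negative roots by c⁻¹ has exactly n elements, and the ⟨c⟩-orbits of the roots c^k(β), β ∈ Φ⁺(c⁻¹), k ∈ ℤ, are pairwise distinct; i.e. no two distinct elements of Φ⁺(c⁻¹) lie in the same ⟨c⟩-orbit in the root system. -/

import Mathlib

open List

namespace CoxPaper

/-- Irreducibility of a Coxeter matrix: connectedness of the Coxeter diagram, the graph
on `B` with an edge between distinct `i`, `j` whenever `M i j ≠ 2`. -/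
def IsIrreducible {B : Type*} (M : CoxeterMatrix B) : Prop :=
  (SimpleGraph.fromRel (fun i j => M i j ≠ 2)).Connected

variable {B : Type*} {W : Type*} [Group W] {M : CoxeterMatrix B}

/-- The standard parabolic subgroup `W_I` generated by the simple reflections indexed by `I`. -/
def stdParabolic (cs : CoxeterSystem M W) (I : Set B) : Subgroup W :=
  Subgroup.closure (cs.simple '' I)

/-- A parabolic subgroup: a conjugate of a standard parabolic subgroup. -/
def IsParabolic (cs : CoxeterSystem M W) (P : Subgroup W) : Prop :=
  ∃ (w : W) (I : Set B), P = (stdParabolic cs I).map (MulAut.conj w).toMonoidHom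

/-- An element is essential if it lies in no proper parabolic subgroup. -/
def IsEssential (cs : CoxeterSystem M W) (w : W) : Prop :=
  ∀ P : Subgroup W, IsParabolic cs P → P ≠ ⊤ → w ∉ P

/-- A standard Coxeter element: the product of all the simple reflections, each occurring
exactly once, in some order. -/
def IsStdCoxeterElement (cs : CoxeterSystem M W) (w : W) : Prop :=
  ∃ l : List B, l.Nodup ∧ (∀ i : B, i ∈ l) ∧ w = cs.wordProd l

/-- A Coxeter element: any conjugate of a standard Coxeter element. -/
def IsCoxeterElement (cs : CoxeterSystem M W) (w : W) : Prop :=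
  ∃ (x c : W), IsStdCoxeterElement cs c ∧ w = x * c * x⁻¹

/-- Length of a shortest factorization of `w` as a product of elements of `Ts`. -/
noncomputable def reflLengthOn (Ts : Set W) (w : W) : ℕ :=
  sInf {k | ∃ l : List W, l.length = k ∧ (∀ t ∈ l, t ∈ Ts) ∧ l.prod = w}

/-- The reflection length `ℓ_T(w)`. -/
noncomputable def reflLength (cs : CoxeterSystem M W) (w : W) : ℕ :=
  reflLengthOn {t | cs.IsReflection t} w

/-- A reduced reflection factorization of `w`. -/
def IsReducedReflFactorization (cs : CoxeterSystem M W) (w : W) (l : List W) : Prop :=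
  (∀ t ∈ l, cs.IsReflection t) ∧ l.prod = w ∧ l.length = reflLength cs w

/-- The parabolic closure of a subset `X` of `W`: the intersection of all parabolic
subgroups containing `X` (which is the smallest such parabolic subgroup). -/
noncomputable def parabolicClosure (cs : CoxeterSystem M W) (X : Set W) : Subgroup W :=
  sInf {P | IsParabolic cs P ∧ X ⊆ ↑P}

/-- An element `w` is straight if `ℓ(wᵐ) = |m| ℓ(w)` for all integers `m`. -/
def IsStraight (cs : CoxeterSystem M W) (w : W) : Prop :=
  ∀ m : ℤ, cs.length (w ^ m) = m.natAbs * cs.length w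

/-- The standard geometric (Tits) representation of a Coxeter system on a real vector
space `V` with basis `(e_i)` and symmetric bilinear form `B(e_i, e_j) = -cos (π / m_{ij})`
(interpreted as `-1` when `m_{ij} = ∞`, i.e. `M i j = 0`). -/
structure GeomRep (cs : CoxeterSystem M W) (V : Type*) [AddCommGroup V] [Module ℝ V] where
  /-- the simple roots, a basis of `V` -/
  e : Module.Basis B ℝ V
  /-- the bilinear form -/
  BF : V →ₗ[ℝ] V →ₗ[ℝ] ℝ
  /-- the action of `W` on `V` -/
  σ : W →* (V →ₗ[ℝ] V)
  hBF : ∀ i j, BF (e i) (e j) = if M i j = 0 then -1 else -Real.cos (Real.pi / (M i j : ℝ))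
  hσ : ∀ i v, σ (cs.simple i) v = v - (2 * BF (e i) v) • e i

namespace GeomRep

variable {V : Type*} [AddCommGroup V] [Module ℝ V] {cs : CoxeterSystem M W}

/-- Roots. -/
def IsRoot (ρ : GeomRep cs V) (α : V) : Prop := ∃ (w : W) (i : B), α = ρ.σ w (ρ.e i)

/-- Positive roots. -/
def IsPos (ρ : GeomRep cs V) (α : V) : Prop := ρ.IsRoot α ∧ ∀ i, 0 ≤ ρ.e.repr α i

/-- Negative roots. -/
def IsNeg (ρ : GeomRep cs V) (α : V) : Prop := ρ.IsRoot α ∧ ∀ i, ρ.e.repr α i ≤ 0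

/-- The inversion set `Φ⁺(u)`: positive roots sent by `u` to negative roots. -/
def invSet (ρ : GeomRep cs V) (u : W) : Set V := {α | ρ.IsPos α ∧ ρ.IsNeg (ρ.σ u α)}

end GeomRep

end CoxPaper

/-!
Tits' lemma, `ℓ(w sᵢ) > ℓ(w) → w αᵢ > 0`, reduces to the dihedral subgroups `⟨sᵢ, sⱼ⟩`, where the
images of `αᵢ` have coefficients `U_k(cos (π / mᵢⱼ)) = sin ((k+1) π / mᵢⱼ) / sin (π / mᵢⱼ) ≥ 0`
(Chebyshev polynomials of the second kind). It gives `Φ⁺(sᵢ w) = Φ⁺(w) ∪ {w⁻¹ αᵢ}` when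
`ℓ(sᵢ w) > ℓ(w)`, hence `|Φ⁺(w)| = ℓ(w)`, and `Φ⁺(v) ⊆ Φ⁺(u v)` when `ℓ(u v) = ℓ(u) + ℓ(v)`. A word using every simple reflection once is
reduced (the last letter's root keeps coefficient `1` on its own index), so `|Φ⁺(c⁻¹)| = ℓ(c) = n`.
If `c` is straight, lengths add along `c⁻ᵏ = c⁻⁽ᵏ⁻¹⁾ c⁻¹`, so `c⁻ᵏ` makes all of `Φ⁺(c⁻¹)`
negative for `k ≥ 1`, which rules out `cᵏ β = γ` for `β, γ ∈ Φ⁺(c⁻¹)` and `k ≠ 0`.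
-/

open CoxPaper CoxeterSystem Polynomial Polynomial.Chebyshev

theorem Polynomial.Chebyshev.U_eval_cos_pi_div_nonneg {m : ℕ} {k : ℤ} (hm : m ≠ 1)
    (hk : -1 ≤ k) (hkm : m = 0 ∨ k < m) : 0 ≤ (U ℝ k).eval (Real.cos (Real.pi / m)) := by
  rcases Nat.eq_zero_or_pos m with rfl | hpos
  · simp only [CharP.cast_eq_zero, div_zero, Real.cos_zero, U_eval_one]
    exact_mod_cast (by omega : (0 : ℤ) ≤ k + 1)
  have hm2 : (2 : ℝ) ≤ m := by exact_mod_cast (by omega : 2 ≤ m)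
  have hkm' : (k : ℝ) + 1 ≤ m := by exact_mod_cast (by omega : k + 1 ≤ m)
  have hk' : (0 : ℝ) ≤ k + 1 := by exact_mod_cast (by omega : 0 ≤ k + 1)
  have hsin : 0 < Real.sin (Real.pi / m) := by
    apply Real.sin_pos_of_pos_of_lt_pi (by positivity)
    rw [div_lt_iff₀ (by positivity)]
    nlinarith [Real.pi_pos]
  have hsin' : 0 ≤ Real.sin ((k + 1) * (Real.pi / m)) := by
    apply Real.sin_nonneg_of_nonneg_of_le_pi (by positivity)
    rw [mul_div_assoc', div_le_iff₀ (by positivity)]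
    nlinarith [Real.pi_pos]
  rw [← U_real_cos] at hsin'
  exact nonneg_of_mul_nonneg_left hsin' hsin

namespace CoxeterSystem

variable {B W : Type*} [Group W] {M : CoxeterMatrix B} (cs : CoxeterSystem M W)

local prefix:100 "s" => cs.simple
local prefix:100 "ℓ" => cs.length

theorem exists_simple_mul_wordProd_alternatingWord {i j x : B} (hx : x = i ∨ x = j) (m : ℕ) :
    ∃ m' ≤ m + 1,
      s x * cs.wordProd (alternatingWord i j m) = cs.wordProd (alternatingWord i j m') ∨
      s x * cs.wordProd (alternatingWord i j m) = cs.wordProd (alternatingWord j i m') := by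
  rcases m with _ | m
  · rcases hx with rfl | rfl
    · exact ⟨1, le_rfl, Or.inr (by simp [alternatingWord, wordProd])⟩
    · exact ⟨1, le_rfl, Or.inl (by simp [alternatingWord, wordProd])⟩
  by_cases h : x = if Even m then j else i
  · refine ⟨m, by omega, Or.inl ?_⟩
    rw [alternatingWord_succ', wordProd_cons, ← h, simple_mul_simple_cancel_left]
  · have h' : x = if Even (m + 1) then j else i := by
      by_cases hm : Even m <;> simp only [hm, Nat.even_add_one, if_true, if_false] at h ⊢ <;> tauto
    exact ⟨m + 2, le_rfl, Or.inl (by rw [alternatingWord_succ' i j (m + 1), wordProd_cons, h'])⟩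

theorem exists_wordProd_eq_alternatingWord {i j : B} {L : List B}
    (hL : ∀ x ∈ L, x = i ∨ x = j) :
    ∃ m ≤ L.length, cs.wordProd L = cs.wordProd (alternatingWord i j m) ∨
      cs.wordProd L = cs.wordProd (alternatingWord j i m) := by
  induction L with
  | nil => exact ⟨0, le_rfl, Or.inl rfl⟩
  | cons x L ih =>
    obtain ⟨m, hm, h | h⟩ := ih fun y hy => hL y (List.mem_cons_of_mem x hy)
    · obtain ⟨m', hm', h'⟩ :=
        cs.exists_simple_mul_wordProd_alternatingWord (hL x List.mem_cons_self) m
      exact ⟨m', by simp; omega, by rwa [wordProd_cons, h]⟩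
    · obtain ⟨m', hm', h'⟩ :=
        cs.exists_simple_mul_wordProd_alternatingWord (hL x List.mem_cons_self).symm m
      exact ⟨m', by simp; omega, by rw [wordProd_cons, h]; exact h'.symm⟩

theorem exists_eq_mul_wordProd_of_ascents (i j : B) (w : W) :
    ∃ (v : W) (L : List B), (∀ x ∈ L, x = i ∨ x = j) ∧ w = v * cs.wordProd L ∧
      ℓ w = ℓ v + L.length ∧ ℓ (v * s i) = ℓ v + 1 ∧ ℓ (v * s j) = ℓ v + 1 := by
  induction hn : ℓ w using Nat.strong_induction_on generalizing w with
  | _ n ih =>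
  by_cases hasc : ℓ (w * s i) = ℓ w + 1 ∧ ℓ (w * s j) = ℓ w + 1
  · exact ⟨w, [], by simp, by simp, by simp [hn], hasc.1, hasc.2⟩
  obtain ⟨x, hx, hdesc⟩ : ∃ x, (x = i ∨ x = j) ∧ ℓ (w * s x) + 1 = ℓ w := by
    rcases cs.length_mul_simple w i with hi | hi
    · rcases cs.length_mul_simple w j with hj | hj
      · exact absurd ⟨hi, hj⟩ hasc
      · exact ⟨j, Or.inr rfl, hj⟩
    · exact ⟨i, Or.inl rfl, hi⟩
  obtain ⟨v, L, hL, hw, hlen, hvi, hvj⟩ := ih _ (by omega) (w * s x) rfl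
  refine ⟨v, L ++ [x], ?_, ?_, ?_, hvi, hvj⟩
  · simpa [or_imp, forall_and] using ⟨hL, hx⟩
  · rw [wordProd_append, wordProd_singleton, ← mul_assoc, ← hw, simple_mul_simple_cancel_right]
  · simp only [List.length_append, List.length_singleton]
    omega

theorem exists_alternatingWord_of_length_lt_length_mul_simple {i j : B} {L : List B}
    (hL : ∀ x ∈ L, x = i ∨ x = j) (hlen : L.length < ℓ (cs.wordProd L * s i)) :
    ∃ m, cs.wordProd L = cs.wordProd (alternatingWord i j m) ∧ (M i j = 0 ∨ m < M i j) := by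
  obtain ⟨m, hm, h | h⟩ := cs.exists_wordProd_eq_alternatingWord hL
  · refine ⟨m, h, ?_⟩
    by_contra! hM
    have hred := cs.not_isReduced_alternatingWord j i (m := m + 1)
      (by rw [M.symmetric]; exact hM.1) (by rw [M.symmetric]; omega)
    have hle := cs.length_wordProd_le (alternatingWord j i (m + 1))
    rw [IsReduced, length_alternatingWord] at hred
    rw [length_alternatingWord] at hle
    rw [alternatingWord_succ, wordProd_concat, ← h] at hred hle
    omega
  · rcases m with _ | m
    · exact ⟨0, h, by omega⟩
    · have hle := cs.length_wordProd_le (alternatingWord i j m)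
      rw [alternatingWord_succ, wordProd_concat] at h
      rw [h, simple_mul_simple_cancel_right] at hlen
      rw [length_alternatingWord] at hle
      omega

end CoxeterSystem

namespace CoxPaper.GeomRep

variable {B W : Type*} [Group W] {M : CoxeterMatrix B} {cs : CoxeterSystem M W}
  {V : Type*} [AddCommGroup V] [Module ℝ V] (ρ : GeomRep cs V)

local prefix:100 "s" => cs.simple
local prefix:100 "ℓ" => cs.length

theorem σ_mul_apply (u w : W) (v : V) : ρ.σ (u * w) v = ρ.σ u (ρ.σ w v) := by
  rw [map_mul, Module.End.mul_apply]

@[simp] theorem σ_one_apply (v : V) : ρ.σ 1 v = v := by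
  rw [map_one, Module.End.one_apply]

@[simp] theorem σ_inv_σ_apply (w : W) (v : V) : ρ.σ w⁻¹ (ρ.σ w v) = v := by
  rw [← σ_mul_apply, inv_mul_cancel, σ_one_apply]

@[simp] theorem σ_σ_inv_apply (w : W) (v : V) : ρ.σ w (ρ.σ w⁻¹ v) = v := by
  rw [← σ_mul_apply, mul_inv_cancel, σ_one_apply]

/-- Since `π / 0 = 0` in Lean and `cos 0 = 1`, the `M i j = 0` branch of `hBF` is the same
formula. -/
theorem BF_simple (i j : B) : ρ.BF (ρ.e i) (ρ.e j) = -Real.cos (Real.pi / M i j) := by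
  rw [ρ.hBF]
  split_ifs with h <;> simp [h]

theorem BF_simple_self (i : B) : ρ.BF (ρ.e i) (ρ.e i) = 1 := by
  simp [BF_simple]

theorem BF_comm (x y : V) : ρ.BF x y = ρ.BF y x := by
  have : ρ.BF = ρ.BF.flip := ρ.e.ext fun i => ρ.e.ext fun j => by
    simp [BF_simple, M.symmetric i j]
  exact LinearMap.congr_fun₂ this x y

theorem σ_simple_self (i : B) : ρ.σ (s i) (ρ.e i) = -ρ.e i := by
  rw [ρ.hσ, BF_simple_self]
  module

theorem BF_σ (w : W) (x y : V) : ρ.BF (ρ.σ w x) (ρ.σ w y) = ρ.BF x y := by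
  induction w using cs.simple_induction_left generalizing x y with
  | one => simp
  | mul_simple_left w i ih =>
    rw [σ_mul_apply, σ_mul_apply, ρ.hσ i (ρ.σ w x), ρ.hσ i (ρ.σ w y)]
    simp only [map_sub, map_smul, LinearMap.sub_apply, LinearMap.smul_apply, smul_eq_mul,
      BF_simple_self, ρ.BF_comm (ρ.σ w x) (ρ.e i), ih]
    ring

theorem repr_σ_simple_of_ne {i j : B} (hij : i ≠ j) (v : V) :
    ρ.e.repr (ρ.σ (s i) v) j = ρ.e.repr v j := by
  simp [ρ.hσ, hij]

theorem repr_σ_wordProd_of_notMem {i : B} {L : List B} (hi : i ∉ L) (v : V) :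
    ρ.e.repr (ρ.σ (cs.wordProd L) v) i = ρ.e.repr v i := by
  induction L generalizing v with
  | nil => simp
  | cons x L ih =>
    rw [List.mem_cons, not_or] at hi
    rw [wordProd_cons, σ_mul_apply, ρ.repr_σ_simple_of_ne (Ne.symm hi.1), ih hi.2]

theorem isRoot_simple (i : B) : ρ.IsRoot (ρ.e i) := ⟨1, i, by simp⟩

theorem isPos_simple (i : B) : ρ.IsPos (ρ.e i) :=
  ⟨ρ.isRoot_simple i, fun k => by
    rw [Module.Basis.repr_self]
    exact Finsupp.single_nonneg.2 zero_le_one k⟩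

section

variable {ρ} {α : V}

theorem IsRoot.σ (w : W) (h : ρ.IsRoot α) : ρ.IsRoot (ρ.σ w α) := by
  obtain ⟨u, i, rfl⟩ := h
  exact ⟨w * u, i, by rw [σ_mul_apply]⟩

theorem IsRoot.neg (h : ρ.IsRoot α) : ρ.IsRoot (-α) := by
  obtain ⟨u, i, rfl⟩ := h
  exact ⟨u * s i, i, by rw [σ_mul_apply, σ_simple_self, map_neg]⟩

theorem IsRoot.ne_zero (h : ρ.IsRoot α) : α ≠ 0 := by
  obtain ⟨u, i, rfl⟩ := h
  intro h0
  exact ρ.e.ne_zero i (by simpa using congrArg (ρ.σ u⁻¹) h0)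

theorem IsRoot.BF_self (h : ρ.IsRoot α) : ρ.BF α α = 1 := by
  obtain ⟨u, i, rfl⟩ := h
  rw [BF_σ, BF_simple_self]

theorem IsPos.neg (h : ρ.IsPos α) : ρ.IsNeg (-α) :=
  ⟨h.1.neg, fun i => by simpa using h.2 i⟩

theorem IsNeg.neg (h : ρ.IsNeg α) : ρ.IsPos (-α) :=
  ⟨h.1.neg, fun i => by simpa using h.2 i⟩

theorem IsPos.not_isNeg (hp : ρ.IsPos α) : ¬ρ.IsNeg α := fun hn =>
  hp.1.ne_zero <| ρ.e.repr.injective <| Finsupp.ext fun i => by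
    simpa using le_antisymm (hn.2 i) (hp.2 i)

end

theorem exists_nonneg_σ_alternatingWord {i j : B} (hij : i ≠ j) {m : ℕ}
    (hm : M i j = 0 ∨ m < M i j) : ∃ a b : ℝ, 0 ≤ a ∧ 0 ≤ b ∧
      ρ.σ (cs.wordProd (alternatingWord i j m)) (ρ.e i) = a • ρ.e i + b • ρ.e j := by
  set c := Real.cos (Real.pi / M i j)
  have hBij : ρ.BF (ρ.e i) (ρ.e j) = -c := ρ.BF_simple i j
  have hBji : ρ.BF (ρ.e j) (ρ.e i) = -c := by rw [BF_comm, hBij]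
  have hrec (k : ℤ) : (U ℝ (k + 1)).eval c = 2 * c * (U ℝ k).eval c - (U ℝ (k - 1)).eval c := by
    simp [U_add_one]
  have hformula (n : ℕ) : ρ.σ (cs.wordProd (alternatingWord i j n)) (ρ.e i) =
      (U ℝ (if Even n then n else n - 1)).eval c • ρ.e i +
      (U ℝ (if Even n then n - 1 else n)).eval c • ρ.e j := by
    induction n with
    | zero => simp [alternatingWord]
    | succ n ih =>
      rw [alternatingWord_succ', wordProd_cons, σ_mul_apply, ih]
      by_cases hn : Even n <;>
        simp only [hn, Nat.even_add_one, not_true_eq_false, not_false_eq_true, if_true, if_false,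
          ρ.hσ, map_add, map_smul, smul_eq_mul, hBij, hBji, BF_simple_self] <;>
        push_cast <;> rw [add_sub_cancel_right, hrec] <;> module
  have hM : M i j ≠ 1 := M.off_diagonal i j hij
  refine ⟨_, _, ?_, ?_, hformula m⟩ <;>
    exact U_eval_cos_pi_div_nonneg hM (by split_ifs <;> omega) (by split_ifs <;> omega)

/-- Tits' lemma. Induct on `ℓ w`: write `w = v u` with `u ∈ ⟨sᵢ, sⱼ⟩` for a right descent `sⱼ`
of `w`; then `v` sends `αᵢ, αⱼ` to positive roots and `u αᵢ` is a nonnegative combination of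
`αᵢ, αⱼ`. -/
theorem isPos_σ_simple_of_length_mul_simple {w : W} {i : B} (h : ℓ (w * s i) = ℓ w + 1) :
    ρ.IsPos (ρ.σ w (ρ.e i)) := by
  induction hn : ℓ w using Nat.strong_induction_on generalizing w i with
  | _ n ih =>
  rcases eq_or_ne w 1 with rfl | hw
  · simpa using ρ.isPos_simple i
  obtain ⟨j, hj⟩ := cs.exists_rightDescent_of_ne_one hw
  rw [cs.isRightDescent_iff] at hj
  have hij : i ≠ j := by
    rintro rfl
    omega
  obtain ⟨v, L, hL, rfl, hlen, hvi, hvj⟩ := cs.exists_eq_mul_wordProd_of_ascents i j w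
  have hLne : L ≠ [] := by
    rintro rfl
    simp only [wordProd_nil, mul_one] at hj hvj
    omega
  have hv : ℓ v < n := by
    have := List.length_pos_iff.2 hLne
    omega
  have hu : L.length < ℓ (cs.wordProd L * s i) := by
    have := cs.length_mul_le v (cs.wordProd L * s i)
    rw [← mul_assoc] at this
    omega
  obtain ⟨m, hLm, hm⟩ := cs.exists_alternatingWord_of_length_lt_length_mul_simple hL hu
  obtain ⟨a, b, ha, hb, hab⟩ := ρ.exists_nonneg_σ_alternatingWord hij hm
  have hpi := ih _ hv hvi rfl
  have hpj := ih _ hv hvj rfl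
  refine ⟨⟨_, i, rfl⟩, fun k => ?_⟩
  rw [σ_mul_apply, hLm, hab]
  simp only [map_add, map_smul, Finsupp.coe_add, Finsupp.coe_smul, Pi.add_apply,
    Pi.smul_apply, smul_eq_mul]
  exact add_nonneg (mul_nonneg ha (hpi.2 k)) (mul_nonneg hb (hpj.2 k))

theorem isNeg_σ_simple_of_length_mul_simple {w : W} {i : B} (h : ℓ (w * s i) + 1 = ℓ w) :
    ρ.IsNeg (ρ.σ w (ρ.e i)) := by
  have h' : ℓ (w * s i * s i) = ℓ (w * s i) + 1 := by
    rw [simple_mul_simple_cancel_right]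
    omega
  simpa [σ_mul_apply, σ_simple_self] using (ρ.isPos_σ_simple_of_length_mul_simple h').neg

section

variable {ρ} {α : V}

theorem IsRoot.isPos_or_isNeg (h : ρ.IsRoot α) : ρ.IsPos α ∨ ρ.IsNeg α := by
  obtain ⟨w, i, rfl⟩ := h
  rcases cs.length_mul_simple w i with h | h
  · exact Or.inl (ρ.isPos_σ_simple_of_length_mul_simple h)
  · exact Or.inr (ρ.isNeg_σ_simple_of_length_mul_simple h)

/-- A positive root made negative by `sᵢ` has support `{i}`, hence is `αᵢ` since `B(α, α) = 1`. -/
theorem IsPos.eq_simple_of_isNeg_σ_simple {i : B} (hp : ρ.IsPos α)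
    (hn : ρ.IsNeg (ρ.σ (s i) α)) : α = ρ.e i := by
  have hrepr : ρ.e.repr α = Finsupp.single i (ρ.e.repr α i) := by
    ext j
    rcases eq_or_ne i j with rfl | hij
    · simp
    · rw [Finsupp.single_eq_of_ne hij.symm]
      exact le_antisymm (ρ.repr_σ_simple_of_ne hij α ▸ hn.2 j) (hp.2 j)
  have hα : α = ρ.e.repr α i • ρ.e i := by
    simpa using congrArg ρ.e.repr.symm hrepr
  have hBF := hp.1.BF_self
  rw [hα] at hBF
  simp only [map_smul, LinearMap.smul_apply, smul_eq_mul, BF_simple_self, mul_one] at hBF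
  have h1 : ρ.e.repr α i = 1 := by nlinarith [hp.2 i]
  rw [hα, h1, one_smul]

theorem IsPos.σ_simple_of_ne {i : B} (hp : ρ.IsPos α) (hne : α ≠ ρ.e i) :
    ρ.IsPos (ρ.σ (s i) α) :=
  (hp.1.σ _).isPos_or_isNeg.resolve_right fun hn => hne (hp.eq_simple_of_isNeg_σ_simple hn)

end

theorem invSet_one : ρ.invSet 1 = ∅ :=
  Set.eq_empty_of_forall_notMem fun _ hα => hα.1.not_isNeg (by simpa using hα.2)

theorem invSet_simple_mul {w : W} {i : B} (h : ℓ (s i * w) = ℓ w + 1) :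
    ρ.invSet (s i * w) = insert (ρ.σ w⁻¹ (ρ.e i)) (ρ.invSet w) := by
  have hpos : ρ.IsPos (ρ.σ w⁻¹ (ρ.e i)) := by
    apply isPos_σ_simple_of_length_mul_simple
    have := cs.length_inv (w⁻¹ * s i)
    rw [mul_inv_rev, inv_inv, cs.inv_simple] at this
    rw [← this, length_inv, h]
  ext β
  simp only [invSet, Set.mem_insert_iff, Set.mem_ofPred_eq, σ_mul_apply]
  constructor
  · rintro ⟨hβ, hn⟩
    refine (hβ.1.σ w).isPos_or_isNeg.imp (fun hp => ?_) fun hn => ⟨hβ, hn⟩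
    rw [← hp.eq_simple_of_isNeg_σ_simple hn, σ_inv_σ_apply]
  · rintro (rfl | ⟨hβ, hn⟩)
    · exact ⟨hpos, by simpa [σ_simple_self] using (ρ.isPos_simple i).neg⟩
    · refine ⟨hβ, ?_⟩
      have hne : -ρ.σ w β ≠ ρ.e i := fun he => hβ.not_isNeg <| by
        simpa [← he] using hpos.neg
      simpa using (hn.neg.σ_simple_of_ne hne).neg

theorem σ_inv_simple_notMem_invSet (w : W) (i : B) : ρ.σ w⁻¹ (ρ.e i) ∉ ρ.invSet w :=
  fun h => (ρ.isPos_simple i).not_isNeg (by simpa using h.2)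

theorem encard_invSet (w : W) : (ρ.invSet w).encard = ℓ w := by
  obtain ⟨L, hL, rfl⟩ := cs.exists_isReduced w
  induction L with
  | nil => simp [invSet_one]
  | cons i L ih =>
    have hL' : cs.IsReduced L := by simpa using hL.drop 1
    have h : ℓ (s i * cs.wordProd L) = ℓ (cs.wordProd L) + 1 := by
      rw [← wordProd_cons, hL, hL', List.length_cons]
    rw [wordProd_cons, ρ.invSet_simple_mul h,
      Set.encard_insert_of_notMem (ρ.σ_inv_simple_notMem_invSet _ i), ih hL', h]
    push_cast
    rfl

theorem ncard_invSet (w : W) : (ρ.invSet w).ncard = ℓ w := by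
  rw [Set.ncard_def, encard_invSet, ENat.toNat_natCast]

theorem invSet_subset_invSet_mul {u v : W} (h : ℓ (u * v) = ℓ u + ℓ v) :
    ρ.invSet v ⊆ ρ.invSet (u * v) := by
  obtain ⟨L, hL, rfl⟩ := cs.exists_isReduced u
  induction L with
  | nil => simp
  | cons i L ih =>
    have hL' : cs.IsReduced L := by simpa using hL.drop 1
    rw [hL, List.length_cons, wordProd_cons, mul_assoc] at h
    have h1 := cs.length_mul_le (cs.wordProd L) v
    have h2 := cs.length_mul_le (s i) (cs.wordProd L * v)
    rw [hL'] at h1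
    rw [length_simple] at h2
    have hasc : ℓ (s i * (cs.wordProd L * v)) = ℓ (cs.wordProd L * v) + 1 := by omega
    rw [wordProd_cons, mul_assoc, ρ.invSet_simple_mul hasc]
    exact (ih hL' (by rw [hL']; omega)).trans (Set.subset_insert _ _)

theorem isReduced_of_nodup (ρ : GeomRep cs V) {L : List B} (hL : L.Nodup) : cs.IsReduced L := by
  induction L using List.reverseRecOn with
  | nil => simp [CoxeterSystem.IsReduced]
  | append_singleton L i ih =>
    rw [← List.concat_eq_append, List.nodup_concat] at hL
    have hasc : ℓ (cs.wordProd L * s i) = ℓ (cs.wordProd L) + 1 := by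
      refine (cs.length_mul_simple _ i).resolve_right fun h => ?_
      have hcoord := (ρ.isNeg_σ_simple_of_length_mul_simple h).2 i
      rw [ρ.repr_σ_wordProd_of_notMem hL.1, Module.Basis.repr_self,
        Finsupp.single_eq_same] at hcoord
      exact absurd hcoord (by norm_num)
    rw [CoxeterSystem.IsReduced, wordProd_append, wordProd_singleton, hasc, ih hL.2,
      List.length_append, List.length_singleton]

theorem length_eq_card_of_isStdCoxeterElement [Fintype B] (ρ : GeomRep cs V) {c : W}
    (hc : IsStdCoxeterElement cs c) : ℓ c = Fintype.card B := by
  classical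
  obtain ⟨L, hnd, hall, rfl⟩ := hc
  rw [ρ.isReduced_of_nodup hnd, ← List.toFinset_card_of_nodup hnd,
    Finset.eq_univ_of_forall fun i => List.mem_toFinset.2 (hall i), Finset.card_univ]

end CoxPaper.GeomRep

namespace CoxPaper.IsStraight

variable {B W : Type*} [Group W] {M : CoxeterMatrix B} {cs : CoxeterSystem M W} {w : W}

theorem length_pow (hw : IsStraight cs w) (n : ℕ) : cs.length (w ^ n) = n * cs.length w := by
  simpa using hw n

theorem inv (hw : IsStraight cs w) : IsStraight cs w⁻¹ := fun m => by
  rw [inv_zpow', hw, Int.natAbs_neg, length_inv]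

variable {V : Type*} [AddCommGroup V] [Module ℝ V] {ρ : GeomRep cs V} {β γ : V}

theorem isNeg_σ_zpow_of_mem_invSet (hw : IsStraight cs w) (hβ : β ∈ ρ.invSet w⁻¹) {k : ℤ}
    (hk : k < 0) : ρ.IsNeg (ρ.σ (w ^ k) β) := by
  obtain ⟨n, rfl⟩ : ∃ n : ℕ, k = -(n + 1 : ℕ) := ⟨(-k - 1).toNat, by omega⟩
  have hlen : cs.length (w⁻¹ ^ n * w⁻¹) = cs.length (w⁻¹ ^ n) + cs.length w⁻¹ := by
    rw [← pow_succ, hw.inv.length_pow, hw.inv.length_pow]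
    ring
  have := ρ.invSet_subset_invSet_mul hlen hβ
  rw [← pow_succ, inv_pow, ← zpow_natCast, ← zpow_neg] at this
  exact this.2

/-- If `k < 0` then `γ = wᵏ β` is negative, and if `k > 0` then so is `β = w⁻ᵏ γ`. -/
theorem eq_zero_of_σ_zpow_mem_invSet (hw : IsStraight cs w) (hβ : β ∈ ρ.invSet w⁻¹)
    (hγ : γ ∈ ρ.invSet w⁻¹) {k : ℤ} (h : ρ.σ (w ^ k) β = γ) : k = 0 := by
  by_contra hk
  rcases lt_or_gt_of_ne hk with hk | hk
  · exact hγ.1.not_isNeg (h ▸ hw.isNeg_σ_zpow_of_mem_invSet hβ hk)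
  · have h' : ρ.σ (w ^ (-k)) γ = β := by
      rw [← h, ← GeomRep.σ_mul_apply, ← zpow_add, neg_add_cancel, zpow_zero, GeomRep.σ_one_apply]
    exact hβ.1.not_isNeg (h' ▸ hw.isNeg_σ_zpow_of_mem_invSet hγ (neg_neg_of_pos hk))

end CoxPaper.IsStraight

open CoxPaper in
theorem stmt_17_general {B W : Type*} [Fintype B] [Group W] {M : CoxeterMatrix B}
    (cs : CoxeterSystem M W)
    {V : Type*} [AddCommGroup V] [Module ℝ V] (ρ : GeomRep cs V)
    {c : W} (hc : IsStdCoxeterElement cs c) (hstraight : IsStraight cs c) :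
    (ρ.invSet c⁻¹).ncard = Fintype.card B ∧
    ∀ β ∈ ρ.invSet c⁻¹, ∀ γ ∈ ρ.invSet c⁻¹, β ≠ γ → ∀ k : ℤ, ρ.σ (c ^ k) β ≠ γ := by
  refine ⟨?_, fun β hβ γ hγ hne k hk => hne ?_⟩
  · rw [ρ.ncard_invSet, cs.length_inv, ρ.length_eq_card_of_isStdCoxeterElement hc]
  · rw [← hk, hstraight.eq_zero_of_σ_zpow_mem_invSet hβ hγ hk, zpow_zero, ρ.σ_one_apply]

open CoxPaper in
/-- For a straight standard Coxeter element `c` of an irreducible infinite Coxeter system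
of rank `n`, the inversion set `Φ⁺(c⁻¹)` has exactly `n` elements, and distinct elements
of `Φ⁺(c⁻¹)` lie in distinct `⟨c⟩`-orbits. -/
theorem stmt_17 {B W : Type*} [Fintype B] [Group W] {M : CoxeterMatrix B}
    (cs : CoxeterSystem M W) (hirr : IsIrreducible M) (hinf : Infinite W)
    {V : Type*} [AddCommGroup V] [Module ℝ V] (ρ : GeomRep cs V)
    {c : W} (hc : IsStdCoxeterElement cs c) (hstraight : IsStraight cs c) :
    (ρ.invSet c⁻¹).ncard = Fintype.card B ∧
    ∀ β ∈ ρ.invSet c⁻¹, ∀ γ ∈ ρ.invSet c⁻¹, β ≠ γ → ∀ k : ℤ, ρ.σ (c ^ k) β ≠ γ :=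
  stmt_17_general cs ρ hc hstraight
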